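/- arXiv:1209.3467 — 3 statements merged into one kernel-verified Lean document; each statement's English description precedes it below -/
import Mathlib

section
/- Let G be a group and let n, k be positive integers with 1 ≤ k ≤ n. Then [N_{n,k}(G), G] = N_{n+1,k+1}(G), and for every positive integer m, N_{n,k}(G)^{4^m} ≤ N_{n+m,k}(G). -/
/-- `H^m`: the subgroup generated by the `m`-th powers of elements of `H`. -/
def sPow {G : Type*} [Group G] (H : Subgroup G) (m : ℕ) : Subgroup G :=
  Subgroup.closure ((fun h => h ^ m) '' (H : Set G))

/-- `γ_n(G)`, the lower central series indexed so that `γ_1(G) = G`. -/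
def gamma (G : Type*) [Group G] (n : ℕ) : Subgroup G :=
  (⊤ : Subgroup G).lowerCentralSeries (n - 1)

/-- `N_{n,k}(G) = γ_k(G)^{4^{n-k}} ⋯ γ_n(G)` (product of normal subgroups = join). -/
def Nnk (G : Type*) [Group G] (n k : ℕ) : Subgroup G :=
  ⨆ i ∈ Finset.Icc k n, sPow (gamma G i) (4 ^ (n - i))

/-- The `λ̄`-series: `λ̄_1(G) = G`, `λ̄_{n+1}(G) = λ̄_n(G)^4 [λ̄_n(G), G]`. -/
def lambdaBar (G : Type*) [Group G] : ℕ → Subgroup G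
  | 0 => ⊤
  | 1 => ⊤
  | (n + 2) => sPow (lambdaBar G (n + 1)) 4 ⊔ ⁅lambdaBar G (n + 1), (⊤ : Subgroup G)⁆

/-- The lower `p`-central series: `λ_1(G) = G`, `λ_{n+1}(G) = λ_n(G)^p [λ_n(G), G]`. -/
def lowP (G : Type*) [Group G] (p : ℕ) : ℕ → Subgroup G
  | 0 => ⊤
  | 1 => ⊤
  | (n + 2) => sPow (lowP G p (n + 1)) p ⊔ ⁅lowP G p (n + 1), (⊤ : Subgroup G)⁆

/-- `Ω_i(G)`: subgroup generated by elements of order dividing `p^i`. -/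
def Omega (G : Type*) [Group G] (p i : ℕ) : Subgroup G :=
  Subgroup.closure {x : G | x ^ p ^ i = 1}

/-- A finite `p`-group is `p`-central if `Ω_1(G) ≤ Z(G)` for odd `p`,
resp. `Ω_2(G) ≤ Z(G)` for `p = 2`. -/
def IsPCentral (p : ℕ) (G : Type*) [Group G] : Prop :=
  if p = 2 then Omega G 2 2 ≤ Subgroup.center G else Omega G p 1 ≤ Subgroup.center G

instance gamma_normal (G : Type*) [Group G] (n : ℕ) : (gamma G n).Normal :=
  inferInstanceAs ((⊤ : Subgroup G).lowerCentralSeries (n - 1)).Normal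

instance sPow_normal {G : Type*} [Group G] (H : Subgroup G) [hH : H.Normal] (m : ℕ) :
    (sPow H m).Normal := by
  constructor
  intro x hx g
  induction hx using Subgroup.closure_induction with
  | mem y hy =>
    obtain ⟨h, hh, rfl⟩ := hy
    exact Subgroup.subset_closure ⟨g * h * g⁻¹, hH.conj_mem h hh g, by
      simp [conj_pow]⟩
  | one => simpa using (sPow H m).one_mem
  | mul a b _ _ ha hb =>
    have : g * (a * b) * g⁻¹ = (g * a * g⁻¹) * (g * b * g⁻¹) := by group
    rw [this]; exact (sPow H m).mul_mem ha hb
  | inv a _ ha =>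
    have : g * a⁻¹ * g⁻¹ = (g * a * g⁻¹)⁻¹ := by group
    rw [this]; exact (sPow H m).inv_mem ha

theorem normal_iSup {G : Type*} [Group G] {ι : Sort*} (f : ι → Subgroup G)
    (h : ∀ i, (f i).Normal) : (⨆ i, f i).Normal := by
  constructor
  intro x hx g
  refine Subgroup.iSup_induction f (C := fun y => g * y * g⁻¹ ∈ ⨆ i, f i) hx
    (fun i y hy => Subgroup.mem_iSup_of_mem i ((h i).conj_mem y hy g)) (by simpa using Subgroup.one_mem (⨆ i, f i)) ?_
  intro a b ha hb
  have : g * (a * b) * g⁻¹ = (g * a * g⁻¹) * (g * b * g⁻¹) := by group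
  rw [this]; exact Subgroup.mul_mem _ ha hb

instance Nnk_normal (G : Type*) [Group G] (n k : ℕ) : (Nnk G n k).Normal :=
  normal_iSup _ fun i => normal_iSup _ fun _ => inferInstance

instance lambdaBar_normal (G : Type*) [Group G] : ∀ n, (lambdaBar G n).Normal
  | 0 => inferInstanceAs (⊤ : Subgroup G).Normal
  | 1 => inferInstanceAs (⊤ : Subgroup G).Normal
  | (n + 2) => by
    haveI := lambdaBar_normal G (n + 1)
    exact inferInstanceAs
      (sPow (lambdaBar G (n + 1)) 4 ⊔ ⁅lambdaBar G (n + 1), (⊤ : Subgroup G)⁆).Normal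

instance lowP_normal (G : Type*) [Group G] (p : ℕ) : ∀ n, (lowP G p n).Normal
  | 0 => inferInstanceAs (⊤ : Subgroup G).Normal
  | 1 => inferInstanceAs (⊤ : Subgroup G).Normal
  | (n + 2) => by
    haveI := lowP_normal G p (n + 1)
    exact inferInstanceAs
      (sPow (lowP G p (n + 1)) p ⊔ ⁅lowP G p (n + 1), (⊤ : Subgroup G)⁆).Normal


/-!
Two congruences drive the argument: for `x ∈ N` and `g ∈ H`, `⁅x ^ m, g⁆ ≡ ⁅x, g⁆ ^ m` modulo
`⁅⁅N, H⁆, N⁆`, and on a subgroup `N` the map `x ↦ x ^ m` is multiplicative modulo `⁅N, N⁆`.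
Writing `N_{n,k} = γ_k^{4^{n-k}} N_{n,k+1}`, they give `⁅N_{n,k}, G⁆ ≤ N_{n+1,k+1}` and
`N_{n,k}^4 ≤ N_{n+1,k}` simultaneously, by induction on `n` and downward induction on `k`.
They also give `⁅N_{n,k}, G⁆^4 ≤ ⁅N_{n+1,k}, G⁆`, so that `γ_{i+1}^{4^{n-i}} ≤ ⁅N_{n,i}, G⁆` by
induction on `n`, which is the reverse inclusion. Iterating `N_{n,k}^4 ≤ N_{n+1,k}` gives the
power statement.
-/

open scoped commutatorElement

open Subgroup

section

variable {G : Type*} [Group G]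

theorem Commute.commutatorElement_pow_left {a b : G} (h : Commute a ⁅a, b⁆) (m : ℕ) :
    ⁅a ^ m, b⁆ = ⁅a, b⁆ ^ m := by
  induction m with
  | zero => simp [commutatorElement_one_left]
  | succ m ih =>
    rw [pow_succ', commutatorElement_mul_left_eq_conj_mul, ih, (h.pow_right m).eq,
      mul_inv_cancel_right, pow_succ]

theorem commutatorElement_mem_commutator {N H : Subgroup G} {x g : G} (hx : x ∈ N) (hg : g ∈ H) :
    ⁅x, ⁅x, g⁆⁆ ∈ ⁅⁅N, H⁆, N⁆ := by
  rw [← commutatorElement_inv]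
  exact inv_mem (commutator_mem_commutator (commutator_mem_commutator hx hg) hx)

section CongruenceModNormal

variable {K : Subgroup G} [K.Normal]

theorem commutatorElement_pow_left_mem_iff {x g : G} (h : ⁅x, ⁅x, g⁆⁆ ∈ K) (m : ℕ) :
    ⁅x ^ m, g⁆ ∈ K ↔ ⁅x, g⁆ ^ m ∈ K := by
  have hc : Commute (x : G ⧸ K) ⁅(x : G ⧸ K), (g : G ⧸ K)⁆ := by
    rw [← commutatorElement_eq_one_iff_commute, ← QuotientGroup.mk'_apply,
      ← QuotientGroup.mk'_apply, ← map_commutatorElement, ← map_commutatorElement]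
    exact (QuotientGroup.eq_one_iff _).mpr h
  rw [← QuotientGroup.eq_one_iff, ← QuotientGroup.eq_one_iff (⁅x, g⁆ ^ m)]
  simp only [← QuotientGroup.mk'_apply, map_commutatorElement, map_pow]
  simp only [QuotientGroup.mk'_apply, hc.commutatorElement_pow_left]

theorem mul_pow_mem_iff {a b : G} (h : ⁅a, b⁆ ∈ K) (m : ℕ) :
    (a * b) ^ m ∈ K ↔ a ^ m * b ^ m ∈ K := by
  have hc : Commute (a : G ⧸ K) (b : G ⧸ K) := by
    rw [← commutatorElement_eq_one_iff_commute, ← QuotientGroup.mk'_apply,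
      ← QuotientGroup.mk'_apply, ← map_commutatorElement]
    exact (QuotientGroup.eq_one_iff _).mpr h
  rw [← QuotientGroup.eq_one_iff, ← QuotientGroup.eq_one_iff (a ^ m * b ^ m)]
  simp only [QuotientGroup.mk_mul, QuotientGroup.mk_pow, hc.mul_pow]

theorem commutator_closure_le {S : Set G} {H : Subgroup G}
    (h : ∀ s ∈ S, ∀ g ∈ H, ⁅s, g⁆ ∈ K) : ⁅closure S, H⁆ ≤ K := by
  rw [commutator_le]
  intro x hx g hg
  induction hx using closure_induction with
  | mem s hs => exact h s hs g hg
  | one => simp [commutatorElement_one_left]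
  | mul a b _ _ ha hb =>
    rw [commutatorElement_mul_left_eq_conj_mul]
    exact K.mul_mem (Normal.conj_mem ‹_› _ hb a) ha
  | inv a _ ha =>
    rw [commutatorElement_inv_left, ← commutatorElement_inv]
    exact Normal.conj_mem' ‹_› _ (K.inv_mem ha) a

theorem commutator_sup_le {A B H : Subgroup G} (hA : ⁅A, H⁆ ≤ K) (hB : ⁅B, H⁆ ≤ K) :
    ⁅A ⊔ B, H⁆ ≤ K := by
  rw [← closure_eq A, ← closure_eq B, ← Subgroup.closure_union]
  refine commutator_closure_le fun s hs g hg => ?_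
  rcases hs with hs | hs
  · exact hA (commutator_mem_commutator hs hg)
  · exact hB (commutator_mem_commutator hs hg)

end CongruenceModNormal

section sPow

theorem sPow_le_iff {H K : Subgroup G} {m : ℕ} : sPow H m ≤ K ↔ ∀ x ∈ H, x ^ m ∈ K := by
  simp [sPow, closure_le, Set.subset_def]

theorem pow_mem_sPow {H : Subgroup G} {x : G} (hx : x ∈ H) (m : ℕ) : x ^ m ∈ sPow H m :=
  subset_closure ⟨x, hx, rfl⟩

theorem sPow_mono {H K : Subgroup G} (h : H ≤ K) (m : ℕ) : sPow H m ≤ sPow K m :=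
  closure_mono (Set.image_mono h)

@[simp]
theorem sPow_one (H : Subgroup G) : sPow H 1 = H := by
  simp [sPow]

theorem sPow_mul_le (H : Subgroup G) (a b : ℕ) : sPow H (a * b) ≤ sPow (sPow H a) b :=
  sPow_le_iff.2 fun x hx => pow_mul x a b ▸ pow_mem_sPow (pow_mem_sPow hx a) b

variable {K : Subgroup G} [K.Normal] {m : ℕ}

theorem sPow_closure_le {S : Set G} (hS : ∀ s ∈ S, s ^ m ∈ K)
    (hcomm : ⁅closure S, closure S⁆ ≤ K) : sPow (closure S) m ≤ K := by
  refine sPow_le_iff.2 fun x hx => ?_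
  induction hx using closure_induction with
  | mem s hs => exact hS s hs
  | one => simp
  | mul a b ha hb iha ihb =>
    exact (mul_pow_mem_iff (hcomm (commutator_mem_commutator ha hb)) m).2 (K.mul_mem iha ihb)
  | inv a _ ha => simpa using ha

theorem sPow_sup_le {A B : Subgroup G} (hA : sPow A m ≤ K) (hB : sPow B m ≤ K)
    (hcomm : ⁅A ⊔ B, A ⊔ B⁆ ≤ K) : sPow (A ⊔ B) m ≤ K := by
  rw [← closure_eq A, ← closure_eq B, ← Subgroup.closure_union] at hcomm ⊢
  refine sPow_closure_le (fun s hs => ?_) hcomm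
  rcases hs with hs | hs
  · exact hA (pow_mem_sPow hs m)
  · exact hB (pow_mem_sPow hs m)

theorem sPow_sPow_le {H : Subgroup G} {a : ℕ} (hpow : sPow H (a * m) ≤ K)
    (hcomm : ⁅sPow H a, sPow H a⁆ ≤ K) : sPow (sPow H a) m ≤ K := by
  refine sPow_closure_le ?_ hcomm
  rintro _ ⟨x, hx, rfl⟩
  rw [← pow_mul]
  exact hpow (pow_mem_sPow hx _)

theorem commutator_sPow_le {N H : Subgroup G} (hpow : sPow ⁅N, H⁆ m ≤ K)
    (hcomm : ⁅⁅N, H⁆, N⁆ ≤ K) : ⁅sPow N m, H⁆ ≤ K := by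
  refine commutator_closure_le ?_
  rintro _ ⟨x, hx, rfl⟩ g hg
  exact (commutatorElement_pow_left_mem_iff (hcomm (commutatorElement_mem_commutator hx hg)) m).2
    (hpow (pow_mem_sPow (commutator_mem_commutator hx hg) m))

theorem sPow_commutator_le {N H : Subgroup G} [N.Normal] (hpow : ⁅sPow N m, H⁆ ≤ K)
    (hcomm : ⁅⁅N, H⁆, N⁆ ≤ K) : sPow ⁅N, H⁆ m ≤ K := by
  rw [commutator_def N H]
  refine sPow_closure_le ?_ ?_
  · rintro _ ⟨x, hx, g, hg, rfl⟩
    exact (commutatorElement_pow_left_mem_iff (hcomm (commutatorElement_mem_commutator hx hg)) m).1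
      (hpow (commutator_mem_commutator (pow_mem_sPow hx m) hg))
  · rw [← commutator_def N H]
    exact (commutator_mono le_rfl (commutator_le_left N H)).trans hcomm

end sPow

theorem gamma_succ {i : ℕ} (hi : 1 ≤ i) : gamma G (i + 1) = ⁅gamma G i, ⊤⁆ := by
  obtain ⟨j, rfl⟩ := Nat.exists_eq_add_of_le' hi
  rfl

section Nnk

variable {n k : ℕ}

theorem Nnk_le_iff {K : Subgroup G} :
    Nnk G n k ≤ K ↔ ∀ i, k ≤ i → i ≤ n → sPow (gamma G i) (4 ^ (n - i)) ≤ K := by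
  simp [Nnk, and_imp]

theorem sPow_gamma_le_Nnk {i : ℕ} (hki : k ≤ i) (hin : i ≤ n) :
    sPow (gamma G i) (4 ^ (n - i)) ≤ Nnk G n k :=
  Nnk_le_iff.1 le_rfl i hki hin

theorem Nnk_anti {k' : ℕ} (h : k ≤ k') : Nnk G n k' ≤ Nnk G n k :=
  Nnk_le_iff.2 fun _ hki hin => sPow_gamma_le_Nnk (h.trans hki) hin

theorem Nnk_eq_bot (h : n < k) : Nnk G n k = ⊥ :=
  le_bot_iff.1 <| Nnk_le_iff.2 fun _ hki hin => absurd (hki.trans hin) (not_le.2 h)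

theorem Nnk_eq_sup (h : k ≤ n) :
    Nnk G n k = sPow (gamma G k) (4 ^ (n - k)) ⊔ Nnk G n (k + 1) := by
  refine le_antisymm (Nnk_le_iff.2 fun i hki hin => ?_)
    (sup_le (sPow_gamma_le_Nnk le_rfl h) (Nnk_anti k.le_succ))
  rcases hki.eq_or_lt with rfl | hlt
  · exact le_sup_left
  · exact le_sup_of_le_right (sPow_gamma_le_Nnk hlt hin)

theorem Nnk_self : Nnk G n n = gamma G n := by
  rw [Nnk_eq_sup le_rfl, Nnk_eq_bot n.lt_succ_self, sup_bot_eq, Nat.sub_self, pow_zero, sPow_one]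

end Nnk

section LowerCentralPowerSeries

variable {n k : ℕ}

theorem commutator_Nnk_le_and_sPow_Nnk_le_of_lt (h : n < k) :
    ⁅Nnk G n k, ⊤⁆ ≤ Nnk G (n + 1) (k + 1) ∧ sPow (Nnk G n k) 4 ≤ Nnk G (n + 1) k := by
  rw [Nnk_eq_bot h, commutator_bot_left]
  exact ⟨bot_le, sPow_le_iff.2 fun x hx => by simp [mem_bot.1 hx]⟩

theorem commutator_Nnk_succ_le (hkn : k ≤ n) (h₁ : ⁅Nnk G n k, ⊤⁆ ≤ Nnk G (n + 1) (k + 1))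
    (h₂ : ⁅Nnk G (n + 1) (k + 1), ⊤⁆ ≤ Nnk G (n + 2) (k + 2))
    (h₃ : sPow (Nnk G (n + 1) (k + 1)) 4 ≤ Nnk G (n + 2) (k + 1)) :
    ⁅Nnk G (n + 1) k, ⊤⁆ ≤ Nnk G (n + 2) (k + 1) := by
  set H := sPow (gamma G k) (4 ^ (n - k))
  have hH : ⁅H, ⊤⁆ ≤ Nnk G (n + 1) (k + 1) :=
    (commutator_mono (sPow_gamma_le_Nnk le_rfl hkn) le_rfl).trans h₁
  have h₂' := h₂.trans (Nnk_anti (k + 1).le_succ)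
  rw [Nnk_eq_sup (hkn.trans n.le_succ)]
  refine commutator_sup_le ?_ h₂'
  calc ⁅sPow (gamma G k) (4 ^ (n + 1 - k)), ⊤⁆ ≤ ⁅sPow H 4, ⊤⁆ := by
        rw [Nat.sub_add_comm hkn, pow_succ]
        exact commutator_mono (sPow_mul_le _ _ _) le_rfl
    _ ≤ Nnk G (n + 2) (k + 1) :=
        commutator_sPow_le ((sPow_mono hH 4).trans h₃) ((commutator_mono hH le_top).trans h₂')

theorem sPow_Nnk_le (hkn : k ≤ n) (h₁ : ⁅Nnk G n k, ⊤⁆ ≤ Nnk G (n + 1) (k + 1))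
    (h₂ : sPow (Nnk G n (k + 1)) 4 ≤ Nnk G (n + 1) (k + 1)) :
    sPow (Nnk G n k) 4 ≤ Nnk G (n + 1) k := by
  have hcomm : ⁅Nnk G n k, Nnk G n k⁆ ≤ Nnk G (n + 1) k :=
    (commutator_mono le_rfl le_top).trans (h₁.trans (Nnk_anti k.le_succ))
  rw [Nnk_eq_sup hkn] at hcomm ⊢
  refine sPow_sup_le (sPow_sPow_le ?_ ?_) (h₂.trans (Nnk_anti k.le_succ)) hcomm
  · rw [← pow_succ, ← Nat.sub_add_comm hkn]
    exact sPow_gamma_le_Nnk le_rfl (hkn.trans n.le_succ)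
  · exact (commutator_mono le_sup_left le_sup_left).trans hcomm

theorem commutator_Nnk_le_and_sPow_Nnk_le (hk : 1 ≤ k) :
    ⁅Nnk G n k, ⊤⁆ ≤ Nnk G (n + 1) (k + 1) ∧ sPow (Nnk G n k) 4 ≤ Nnk G (n + 1) k := by
  induction n generalizing k with
  | zero => exact commutator_Nnk_le_and_sPow_Nnk_le_of_lt hk
  | succ n ih =>
    obtain hlt | hle := lt_or_ge (n + 1) k
    · exact commutator_Nnk_le_and_sPow_Nnk_le_of_lt hlt
    induction hle using Nat.decreasingInduction with
    | self =>
      have h₁ : ⁅Nnk G (n + 1) (n + 1), ⊤⁆ ≤ Nnk G (n + 2) (n + 2) := by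
        rw [Nnk_self, Nnk_self, gamma_succ hk]
      exact ⟨h₁, sPow_Nnk_le le_rfl h₁
        (commutator_Nnk_le_and_sPow_Nnk_le_of_lt (n + 1).lt_succ_self).2⟩
    | of_succ k hkn IH =>
      obtain ⟨h₂, h₃⟩ := IH (hk.trans k.le_succ)
      have h₁ := commutator_Nnk_succ_le (Nat.le_of_lt_succ hkn) (ih hk).1 h₂ h₃
      exact ⟨h₁, sPow_Nnk_le hkn.le h₁ h₃⟩

theorem sPow_commutator_Nnk_le (hk : 1 ≤ k) :
    sPow ⁅Nnk G n k, (⊤ : Subgroup G)⁆ 4 ≤ ⁅Nnk G (n + 1) k, ⊤⁆ := by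
  obtain ⟨h₁, h₂⟩ := commutator_Nnk_le_and_sPow_Nnk_le (G := G) (n := n) hk
  exact sPow_commutator_le (commutator_mono h₂ le_rfl)
    (commutator_mono (h₁.trans (Nnk_anti k.le_succ)) le_top)

theorem sPow_gamma_succ_le_commutator_Nnk {i : ℕ} (hi : 1 ≤ i) (hin : i ≤ n) :
    sPow (gamma G (i + 1)) (4 ^ (n - i)) ≤ ⁅Nnk G n i, ⊤⁆ := by
  induction n, hin using Nat.le_induction with
  | base => rw [Nat.sub_self, pow_zero, sPow_one, Nnk_self, gamma_succ hi]
  | succ n hin ih =>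
    calc sPow (gamma G (i + 1)) (4 ^ (n + 1 - i))
        ≤ sPow (sPow (gamma G (i + 1)) (4 ^ (n - i))) 4 := by
          rw [Nat.sub_add_comm hin, pow_succ]
          exact sPow_mul_le _ _ _
      _ ≤ sPow ⁅Nnk G n i, ⊤⁆ 4 := sPow_mono ih 4
      _ ≤ ⁅Nnk G (n + 1) i, ⊤⁆ := sPow_commutator_Nnk_le hi

theorem Nnk_succ_le_commutator (hk : 1 ≤ k) : Nnk G (n + 1) (k + 1) ≤ ⁅Nnk G n k, ⊤⁆ := by
  refine Nnk_le_iff.2 fun i hki hin => ?_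
  obtain ⟨j, rfl⟩ := Nat.exists_eq_add_of_le' (hk.trans (k.le_succ.trans hki))
  have hkj : k ≤ j := Nat.le_of_succ_le_succ hki
  rw [Nat.add_sub_add_right]
  exact (sPow_gamma_succ_le_commutator_Nnk (hk.trans hkj) (Nat.le_of_succ_le_succ hin)).trans
    (commutator_mono (Nnk_anti hkj) le_rfl)

theorem sPow_Nnk_pow_le (hk : 1 ≤ k) (m : ℕ) : sPow (Nnk G n k) (4 ^ m) ≤ Nnk G (n + m) k := by
  induction m generalizing n with
  | zero => simp
  | succ m ih =>
    calc sPow (Nnk G n k) (4 ^ (m + 1)) ≤ sPow (sPow (Nnk G n k) 4) (4 ^ m) := by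
          rw [pow_succ']
          exact sPow_mul_le _ _ _
      _ ≤ sPow (Nnk G (n + 1) k) (4 ^ m) :=
          sPow_mono (commutator_Nnk_le_and_sPow_Nnk_le hk).2 _
      _ ≤ Nnk G (n + (m + 1)) k := add_right_comm n 1 m ▸ ih

end LowerCentralPowerSeries

end

theorem stmt_0_general (G : Type*) [Group G] (n k : ℕ) (hk : 1 ≤ k) :
    ⁅Nnk G n k, (⊤ : Subgroup G)⁆ = Nnk G (n + 1) (k + 1) ∧
    ∀ m : ℕ, 1 ≤ m → sPow (Nnk G n k) (4 ^ m) ≤ Nnk G (n + m) k :=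
  ⟨le_antisymm (commutator_Nnk_le_and_sPow_Nnk_le hk).1 (Nnk_succ_le_commutator hk),
    fun m _ => sPow_Nnk_pow_le hk m⟩

theorem stmt_0 (G : Type*) [Group G] (n k : ℕ) (hk : 1 ≤ k) (hkn : k ≤ n) :
    ⁅Nnk G n k, (⊤ : Subgroup G)⁆ = Nnk G (n + 1) (k + 1) ∧
    ∀ m : ℕ, 1 ≤ m → sPow (Nnk G n k) (4 ^ m) ≤ Nnk G (n + m) k :=
  stmt_0_general G n k hk
end

section
/- Let p be a prime and let G be a finite p-central group. Let F be a free group of finite rank, let π : F → G be a surjective group homomorphism, and let R = ker π. Then the exponent of the quotient group (γ_2(F) ∩ R)/[F, R] — which by Hopf's formula is the Schur multiplier M(G) — divides the exponent of G. -/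
/-!
Write `R = ker π`. Then `F ⧸ [F, R] → G` is a central extension and `γ₂(F) ∩ R` maps into the
commutator subgroup of `F ⧸ [F, R]`. So it suffices to show, for a central extension `q : E → G`
of a `p`-central group with `exp G = p ^ f`, that `w ^ p ^ f = 1` for each `w ∈ [E, E] ∩ ker q`.
We induct on `f`. Pass to `E ⧸ D → G ⧸ Ω₁(G)`, where `D = [E, q⁻¹ Ω₁(G)]`. The subgroup `D`
consists of central elements of order dividing `p`, because `[e, b] ^ p = [e, b ^ p] = 1`.

The key point is that `G ⧸ Ω₁(G)` is again `p`-central, i.e. `x ^ (p * p * k) = 1` implies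
`[x, g] ^ p = 1` (here `k = 1` for odd `p` and `k = 2` for `p = 2`). We induct on `|G|` and work
in a proper normal subgroup containing `x`. There `z = [g x g⁻¹, x⁻¹]` has order `p`, so `z` is
central. The class-two collection formula then gives `[x, g] ^ p = z ^ (p choose 2)`. This makes
`[x, g]` central, and hence `[x, g] ^ p = [x ^ p, g] = 1`.
-/

open scoped commutatorElement

open Subgroup

section CentralCommutator

variable {G : Type*} [Group G]

theorem commutatorElement_pow_right_of_mem_center {a b : G} (h : ⁅a, b⁆ ∈ center G) (n : ℕ) :
    ⁅a, b ^ n⁆ = ⁅a, b⁆ ^ n := by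
  induction n with
  | zero => simp
  | succ n ih =>
    rw [pow_succ, commutatorElement_mul_right_eq_mul_conj, ih, mul_assoc _ (b ^ n),
      mem_center_iff.mp h, ← mul_assoc, mul_inv_cancel_right, pow_succ]

theorem commutatorElement_pow_left_of_mem_center {a b : G} (h : ⁅a, b⁆ ∈ center G) (n : ℕ) :
    ⁅a ^ n, b⁆ = ⁅a, b⁆ ^ n := by
  have h' : ⁅b, a⁆ ∈ center G := by rw [← commutatorElement_inv]; exact inv_mem h
  rw [← commutatorElement_inv, commutatorElement_pow_right_of_mem_center h', ← inv_pow,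
    commutatorElement_inv]

theorem mul_pow_of_mul_eq_mul_mul_central {a b z : G} (hz : z ∈ center G)
    (h : b * a = a * b * z) (n : ℕ) : (a * b) ^ n = a ^ n * b ^ n * z ^ n.choose 2 := by
  have hzk (k : ℕ) (g : G) : g * z ^ k = z ^ k * g := mem_center_iff.mp (pow_mem hz k) g
  have hb (n : ℕ) : b ^ n * a = a * b ^ n * z ^ n := by
    have hconj : a⁻¹ * b * a⁻¹⁻¹ = b * z := by rw [inv_inv, mul_assoc, h]; group
    have := conj_pow (a := a⁻¹) (b := b) (i := n)
    rw [hconj, Commute.mul_pow (mem_center_iff.mp hz b), inv_inv] at this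
    rw [mul_assoc a, this]; group
  induction n with
  | zero => simp
  | succ n ih =>
    calc (a * b) ^ (n + 1) = a ^ n * (b ^ n * a) * b * z ^ n.choose 2 := by
          rw [pow_succ, ih, mul_assoc _ (z ^ _), ← hzk]; simp only [mul_assoc]
      _ = a ^ (n + 1) * b ^ (n + 1) * z ^ (n + 1).choose 2 := by
          have hC : (n + 1).choose 2 = n + n.choose 2 := by
            rw [Nat.choose_succ_succ', Nat.choose_one_right]
          rw [hb, hC, pow_add z, pow_succ a, pow_succ b]
          simp only [mul_assoc]
          rw [← mul_assoc (z ^ n) b, ← hzk n b, mul_assoc b]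

theorem QuotientGroup.mk_mem_center_of_commutatorElement_mem {N : Subgroup G} [N.Normal] {u : G}
    (h : ∀ v : G, ⁅v, u⁆ ∈ N) : (u : G ⧸ N) ∈ center (G ⧸ N) := by
  refine mem_center_iff.mpr fun v ↦ ?_
  obtain ⟨v, rfl⟩ := QuotientGroup.mk_surjective v
  have h1 : ((⁅v, u⁆ : G) : G ⧸ N) = 1 := (QuotientGroup.eq_one_iff _).mpr (h v)
  rw [← QuotientGroup.mk'_apply, map_commutatorElement] at h1
  exact commutatorElement_eq_one_iff_commute.mp h1

theorem QuotientGroup.mk_mem_center_of_mem {B : Subgroup G} [B.Normal] {b : G} (hb : b ∈ B) :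
    (b : G ⧸ ⁅(⊤ : Subgroup G), B⁆) ∈ center (G ⧸ ⁅(⊤ : Subgroup G), B⁆) :=
  QuotientGroup.mk_mem_center_of_commutatorElement_mem fun v ↦
    commutator_mem_commutator (mem_top v) hb

theorem map_mem_commutator {H : Type*} [Group H] (f : G →* H) {w : G} (hw : w ∈ commutator G) :
    f w ∈ commutator H := by
  have := mem_map_of_mem f hw
  rw [commutator_def, map_commutator] at this
  rw [commutator_def]
  exact commutator_mono le_top le_top this

end CentralCommutator

def TorsionCentral (n : ℕ) (G : Type*) [Group G] : Prop :=
  ∀ t : G, t ^ n = 1 → t ∈ center G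

namespace TorsionCentral

variable {G : Type*} [Group G] {n : ℕ}

theorem of_dvd (h : TorsionCentral n G) {m : ℕ} (hmn : m ∣ n) : TorsionCentral m G := by
  obtain ⟨c, rfl⟩ := hmn
  exact fun t ht ↦ h t (by rw [pow_mul, ht, one_pow])

theorem subgroup (h : TorsionCentral n G) (H : Subgroup G) : TorsionCentral n H :=
  fun t ht ↦ mem_center_iff.mpr fun g ↦
    Subtype.ext (mem_center_iff.mp (h t (by simpa using congrArg Subtype.val ht)) g)

variable {p k : ℕ}

theorem commutatorElement_pow_eq_one_of_conj (hk : p ∣ p.choose 2 * k)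
    (hcent : TorsionCentral (p * k) G) {x g : G} (hx : x ^ (p * (p * k)) = 1)
    (hz : ⁅g * x * g⁻¹, x⁻¹⁆ ^ p = 1) : ⁅x, g⁆ ^ p = 1 := by
  set y := g * x * g⁻¹
  set z := ⁅y, x⁻¹⁆ with hz_def
  have hzc : z ∈ center G := hcent z (by rw [pow_mul, hz, one_pow])
  have hxp : x ^ p ∈ center G := hcent _ (by rw [← pow_mul, hx])
  have hyp : y ^ p = x ^ p := by
    rw [conj_pow, mem_center_iff.mp hxp, mul_inv_cancel_right]
  have hc : ⁅x, g⁆ ^ p = z ^ p.choose 2 := by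
    rw [show ⁅x, g⁆ = x * y⁻¹ by simp only [y, commutatorElement_def]; group,
      mul_pow_of_mul_eq_mul_mul_central hzc (by rw [hz_def, commutatorElement_def]; group),
      inv_pow, hyp, mul_inv_cancel, one_mul]
  have hcc : ⁅x, g⁆ ∈ center G := by
    obtain ⟨m, hm⟩ := hk
    refine hcent _ ?_
    rw [pow_mul, hc, ← pow_mul, hm, pow_mul, hz, one_pow]
  rw [← commutatorElement_pow_left_of_mem_center hcc,
    commutatorElement_eq_one_iff_commute.mpr (mem_center_iff.mp hxp g).symm]

end TorsionCentral

theorem Subgroup.exists_normal_ne_top_le {G : Type*} [Group G] [Finite G] [Group.IsNilpotent G]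
    {H : Subgroup G} (hH : H ≠ ⊤) : ∃ M : Subgroup G, M.Normal ∧ M ≠ ⊤ ∧ H ≤ M := by
  obtain hH' | ⟨M, hM, hHM⟩ := eq_top_or_exists_le_coatom H
  · exact absurd hH' hH
  · exact ⟨M, NormalizerCondition.normal_of_coatom M Group.normalizerCondition_of_isNilpotent hM,
      hM.1, hHM⟩

theorem TorsionCentral.commutatorElement_pow_eq_one {p k : ℕ} [Fact p.Prime]
    (hk : p ∣ p.choose 2 * k) {G : Type*} [Group G] [Finite G] (hpg : IsPGroup p G)
    (hcent : TorsionCentral (p * k) G) {x : G} (hx : x ^ (p * (p * k)) = 1) (g : G) :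
    ⁅x, g⁆ ^ p = 1 := by
  induction hn : Nat.card G using Nat.strong_induction_on generalizing G with
  | _ n ih =>
  by_cases hxg : zpowers x = ⊤
  · obtain ⟨m, rfl⟩ := mem_zpowers_iff.mp (hxg ▸ mem_top g)
    rw [commutatorElement_eq_one_iff_commute.mpr ((Commute.refl x).zpow_right m), one_pow]
  have := hpg.isNilpotent
  obtain ⟨M, hMn, hMtop, hxM⟩ := exists_normal_ne_top_le hxg
  have hx' : x ∈ M := hxM (mem_zpowers x)
  have hcard : Nat.card M < n :=
    hn ▸ lt_of_le_of_ne (card_le_card_group M) (mt (card_eq_iff_eq_top M).mp hMtop)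
  have hy : (⟨g * x * g⁻¹, hMn.conj_mem x hx' g⟩ : M) ^ (p * (p * k)) = 1 :=
    Subtype.ext (by simp [conj_pow, hx])
  have hz := congrArg M.subtype
    (ih _ hcard (hpg.to_subgroup M) (hcent.subgroup M) hy ⟨x⁻¹, inv_mem hx'⟩ rfl)
  rw [map_pow, map_commutatorElement, map_one] at hz
  exact hcent.commutatorElement_pow_eq_one_of_conj hk hx hz

def centralTorsion (G : Type*) [Group G] (n : ℕ) : Subgroup G where
  carrier := {t | t ∈ center G ∧ t ^ n = 1}
  one_mem' := ⟨one_mem _, one_pow n⟩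
  mul_mem' := fun {a b} ⟨ha, ha'⟩ ⟨hb, hb'⟩ ↦
    ⟨mul_mem ha hb, by rw [Commute.mul_pow (mem_center_iff.mp ha b).symm, ha', hb', one_mul]⟩
  inv_mem' := fun ⟨ha, ha'⟩ ↦ ⟨inv_mem ha, by rw [inv_pow, ha', inv_one]⟩

section CentralTorsion

variable {G : Type*} [Group G] {n : ℕ}

instance centralTorsion_normal : (centralTorsion G n).Normal :=
  ⟨fun t ht g ↦ by rwa [mem_center_iff.mp ht.1 g, mul_inv_cancel_right]⟩

theorem TorsionCentral.mem_centralTorsion_iff (h : TorsionCentral n G) {t : G} :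
    t ∈ centralTorsion G n ↔ t ^ n = 1 :=
  ⟨And.right, fun ht ↦ ⟨h t ht, ht⟩⟩

theorem commutator_comap_centralTorsion_le {E : Type*} [Group E] (q : E →* G)
    (hq : q.ker ≤ center E) (n : ℕ) :
    ⁅(⊤ : Subgroup E), (centralTorsion G n).comap q⁆ ≤ centralTorsion E n := by
  rw [commutator_le]
  intro e _ b hb
  obtain ⟨hb_center, hb_pow⟩ := mem_comap.mp hb
  have hcomm : ⁅e, b⁆ ∈ center E := hq <| by
    rw [MonoidHom.mem_ker, map_commutatorElement,
      commutatorElement_eq_one_iff_commute.mpr (mem_center_iff.mp hb_center (q e))]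
  refine ⟨hcomm, ?_⟩
  have hbn : b ^ n ∈ center E := hq (by rw [MonoidHom.mem_ker, map_pow, hb_pow])
  rw [← commutatorElement_pow_right_of_mem_center hcomm,
    commutatorElement_eq_one_iff_commute.mpr (mem_center_iff.mp hbn e)]

theorem TorsionCentral.quotient_centralTorsion {p k : ℕ} [Fact p.Prime]
    (hk : p ∣ p.choose 2 * k) [Finite G] (hpg : IsPGroup p G) (hcent : TorsionCentral (p * k) G) :
    TorsionCentral (p * k) (G ⧸ centralTorsion G p) := by
  intro t ht
  obtain ⟨u, rfl⟩ := QuotientGroup.mk_surjective t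
  rw [← QuotientGroup.mk_pow, QuotientGroup.eq_one_iff] at ht
  have hu : u ^ (p * (p * k)) = 1 := by rw [mul_comm, pow_mul, ht.2]
  refine QuotientGroup.mk_mem_center_of_commutatorElement_mem fun v ↦ ?_
  rw [← commutatorElement_inv]
  exact inv_mem <| (hcent.of_dvd (dvd_mul_right p k)).mem_centralTorsion_iff.mpr
    (hcent.commutatorElement_pow_eq_one hk hpg hu v)

end CentralTorsion

theorem TorsionCentral.pow_eq_one_of_mem_commutator {p k : ℕ} [Fact p.Prime]
    (hk : p ∣ p.choose 2 * k) (f : ℕ) {G : Type*} [Group G] [Finite G] (hpg : IsPGroup p G)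
    (hcent : TorsionCentral (p * k) G) (hexp : ∀ t : G, t ^ p ^ f = 1) {E : Type*} [Group E]
    (q : E →* G) (hq : q.ker ≤ center E) {w : E} (hw : w ∈ commutator E) (hqw : q w = 1) :
    w ^ p ^ f = 1 := by
  induction f generalizing G E with
  | zero =>
    have hE : center E = ⊤ := top_le_iff.mp fun e _ ↦ hq (by simpa using hexp (q e))
    rw [(commutator_eq_bot_iff_center_eq_top E).mpr hE, mem_bot] at hw
    rw [hw, one_pow]
  | succ f ih =>
    have hN := hcent.of_dvd (dvd_mul_right p k)
    set D := ⁅(⊤ : Subgroup E), (centralTorsion G p).comap q⁆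
    let qbar := QuotientGroup.map D (centralTorsion G p) q (commutator_le_right _ _)
    have hqbar : qbar.ker ≤ center (E ⧸ D) := by
      intro a ha
      obtain ⟨e, rfl⟩ := QuotientGroup.mk_surjective a
      rw [MonoidHom.mem_ker, QuotientGroup.map_mk, QuotientGroup.eq_one_iff] at ha
      exact QuotientGroup.mk_mem_center_of_mem ha
    have hexp' (t : G ⧸ centralTorsion G p) : t ^ p ^ f = 1 := by
      obtain ⟨u, rfl⟩ := QuotientGroup.mk_surjective t
      rw [← QuotientGroup.mk_pow, QuotientGroup.eq_one_iff, hN.mem_centralTorsion_iff, ← pow_mul,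
        ← pow_succ, hexp]
    have hwD := ih (hpg.to_quotient _) (hcent.quotient_centralTorsion hk hpg) hexp' qbar hqbar
      (map_mem_commutator (QuotientGroup.mk' D) hw) (by simp [qbar, hqw])
    rw [QuotientGroup.mk'_apply, ← QuotientGroup.mk_pow, QuotientGroup.eq_one_iff] at hwD
    rw [pow_succ, pow_mul]
    exact (commutator_comap_centralTorsion_le q hq p hwD).2

theorem IsPCentral.exists_torsionCentral {p : ℕ} (hp : p.Prime) {G : Type*} [Group G]
    (h : IsPCentral p G) : ∃ k, p ∣ p.choose 2 * k ∧ TorsionCentral (p * k) G := by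
  unfold IsPCentral at h
  split_ifs at h with hp2
  · subst hp2
    exact ⟨2, by decide, fun t ht ↦ h (subset_closure (by simpa using ht))⟩
  · exact ⟨1, by simpa using hp.dvd_choose_self two_ne_zero (hp.two_le.lt_of_ne' hp2),
      fun t ht ↦ h (subset_closure (by simpa using ht))⟩

theorem stmt_17_general (p : ℕ) (hp : p.Prime) (G : Type*) [Group G] [Finite G]
    (hpg : IsPGroup p G) (hcent : IsPCentral p G)
    (r : ℕ) (π : FreeGroup (Fin r) →* G) :
    Monoid.exponent (↥(gamma (FreeGroup (Fin r)) 2 ⊓ π.ker) ⧸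
        ((⁅(⊤ : Subgroup (FreeGroup (Fin r))), π.ker⁆).subgroupOf
          (gamma (FreeGroup (Fin r)) 2 ⊓ π.ker)))
      ∣ Monoid.exponent G := by
  have := Fact.mk hp
  obtain ⟨f, hf⟩ := hpg.exists_exponent_eq_pow
  obtain ⟨k, hk, hcent'⟩ := hcent.exists_torsionCentral hp
  have hexp (t : G) : t ^ p ^ f = 1 := hf ▸ Monoid.pow_exponent_eq_one t
  set K := ⁅(⊤ : Subgroup (FreeGroup (Fin r))), π.ker⁆
  let q := QuotientGroup.lift K π (commutator_le_right _ _)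
  have hq : q.ker ≤ center (FreeGroup (Fin r) ⧸ K) := by
    intro a ha
    obtain ⟨x, rfl⟩ := QuotientGroup.mk_surjective a
    exact QuotientGroup.mk_mem_center_of_mem ha
  rw [hf]
  refine Monoid.exponent_dvd_of_forall_pow_eq_one fun ξ ↦ ?_
  obtain ⟨⟨s, hs⟩, rfl⟩ := QuotientGroup.mk_surjective ξ
  obtain ⟨hs_comm, hs_ker⟩ := mem_inf.mp hs
  have := hcent'.pow_eq_one_of_mem_commutator hk f hpg hexp q hq
    (map_mem_commutator (QuotientGroup.mk' K) hs_comm) hs_ker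
  rw [QuotientGroup.mk'_apply, ← QuotientGroup.mk_pow, QuotientGroup.eq_one_iff] at this
  rw [← QuotientGroup.mk_pow, QuotientGroup.eq_one_iff, mem_subgroupOf, coe_pow]
  exact this

theorem stmt_17 (p : ℕ) (hp : p.Prime) (G : Type*) [Group G] [Finite G]
    (hpg : IsPGroup p G) (hcent : IsPCentral p G)
    (r : ℕ) (π : FreeGroup (Fin r) →* G) (hπ : Function.Surjective π) :
    Monoid.exponent (↥(gamma (FreeGroup (Fin r)) 2 ⊓ π.ker) ⧸
        ((⁅(⊤ : Subgroup (FreeGroup (Fin r))), π.ker⁆).subgroupOf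
          (gamma (FreeGroup (Fin r)) 2 ⊓ π.ker)))
      ∣ Monoid.exponent G :=
  stmt_17_general p hp G hpg hcent r π
end

section
/- Let p be a prime and let G be a finite p-central group. Set ε = 0 if p is odd and ε = 1 if p = 2, and let i ≥ ε be an integer. If x, y ∈ G satisfy [x, y] ∈ Ω_{i-ε}(G), then x^{p^i} y^{p^i} = (xy)^{p^i}. -/
/-!
Fix `e` with `Ω_{e+1}(G) ≤ Z(G)` and `p ∣ (p^{e+1}).choose 2`; for `p`-central groups `e = ε`
works. The heart of the matter is `[Ω_j(G), G] ≤ Ω_{j-e-1}(G)`, proved by induction on `|G|`;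
it makes `Ω_{j+1}/Ω_j` central, so `Ω_j(G)` has exponent `p^j`.

Power law: with `q = p^{e+1}` and `c = [x, y] ∈ Ω_{j-e}`, modulo `Ω_{j-e-1}` the element `c`
is central of order dividing `p`, so `(xy)^q c^{q.choose 2} = x^q y^q` gives `(xy)^q = x^q y^q z`
with `z ∈ Ω_{j-e-1}`; also `[x^q, y^q] ≡ c^{q^2} ≡ 1` modulo `Ω_{j-2e-1}`. The power law at
level `j-e-1`, applied to `(x^q, y^q)` and to `(x^q y^q, z)`, finishes.

Commutator bound for `a^{p^j} = 1`: unless `a` and `g` commute, `a` and `a^g` lie in a proper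
normal subgroup `M` (maximal subgroups of a nilpotent group are normal). As `a^{p^{j-e-1}}` is
central, `a` and `a^g` have equal `p^m`-th powers for `m ≥ j-e-1`, and `e+1` applications of the
power law in `M` to `a` and `d = a⁻¹a^g`, each lowering the exponent by one, give
`d^{p^{j-e-1}} = 1`.
-/

open Subgroup

section Omega

variable {G : Type*} [Group G] {p : ℕ}

lemma pow_pow_eq_one_of_le {x : G} {a b : ℕ} (h : x ^ p ^ a = 1) (hab : a ≤ b) :
    x ^ p ^ b = 1 := by
  rw [← Nat.sub_add_cancel hab, pow_add, pow_mul', h, one_pow]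

lemma mem_Omega_of_pow_eq_one {k : ℕ} {x : G} (h : x ^ p ^ k = 1) : x ∈ Omega G p k :=
  subset_closure h

lemma pow_pow_mem_Omega {x : G} {a : ℕ} (h : x ^ p ^ a = 1) (b : ℕ) :
    x ^ p ^ b ∈ Omega G p (a - b) :=
  mem_Omega_of_pow_eq_one <| by
    rw [← pow_mul, ← pow_add]
    exact pow_pow_eq_one_of_le h (by omega)

lemma Omega_mono {k l : ℕ} (h : k ≤ l) : Omega G p k ≤ Omega G p l :=
  closure_mono fun _ hx => pow_pow_eq_one_of_le hx h

lemma Omega_zero : Omega G p 0 = ⊥ := by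
  rw [eq_bot_iff, Omega, closure_le]
  intro x hx
  simpa using hx

instance Omega_normal (G : Type*) [Group G] (p k : ℕ) : (Omega G p k).Normal := by
  refine ⟨fun x hx g => ?_⟩
  have hconj : (Omega G p k).map (MulAut.conj g).toMonoidHom ≤ Omega G p k := by
    rw [Omega, MonoidHom.map_closure]
    refine closure_mono ?_
    rintro _ ⟨y, hy, rfl⟩
    change y ^ p ^ k = 1 at hy
    change (g * y * g⁻¹) ^ p ^ k = 1
    rw [conj_pow, hy, mul_one, mul_inv_cancel]
  exact hconj ⟨x, hx, rfl⟩

lemma Omega_le_center_of_le_center (K : Subgroup G) {k : ℕ} (h : Omega G p k ≤ center G) :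
    Omega K p k ≤ center K := by
  rw [Omega, closure_le]
  intro t (ht : t ^ p ^ k = 1)
  have htG : (t : G) ∈ center G :=
    h (mem_Omega_of_pow_eq_one (by rw [← coe_pow, ht, coe_one]))
  exact mem_center_iff.mpr fun s => Subtype.ext (mem_center_iff.mp htG s)

end Omega

section CentralCommutator

variable {G : Type*} [Group G] {x y c : G}

lemma mul_pow_mul_comm_of_mem_center (hc : c ∈ center G) (k : ℕ) (a b : G) :
    a * c ^ k * b = a * b * c ^ k := by
  have hcb : Commute b c := mem_center_iff.mp hc b
  rw [mul_assoc, ← (hcb.pow_right k).eq, mul_assoc]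

lemma conj_pow_eq_mul_pow_of_commutator (hc : c ∈ center G) (hxy : x⁻¹ * y⁻¹ * x * y = c)
    (n : ℕ) : (y ^ n)⁻¹ * x * y ^ n = x * c ^ n := by
  have hconj : y⁻¹ * x * y = x * c := by rw [← hxy]; group
  induction n with
  | zero => simp
  | succ n ih =>
    calc (y ^ (n + 1))⁻¹ * x * y ^ (n + 1) = y⁻¹ * ((y ^ n)⁻¹ * x * y ^ n) * y := by group
      _ = y⁻¹ * x * c ^ n * y := by rw [ih, ← mul_assoc y⁻¹]
      _ = y⁻¹ * x * y * c ^ n := mul_pow_mul_comm_of_mem_center hc n _ _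
      _ = x * c ^ (n + 1) := by rw [hconj, pow_succ', mul_assoc]

lemma commutator_pow_pow_of_commutator (hc : c ∈ center G) (hxy : x⁻¹ * y⁻¹ * x * y = c)
    (m n : ℕ) : (x ^ m)⁻¹ * (y ^ n)⁻¹ * x ^ m * y ^ n = c ^ (m * n) := by
  have hconj : (y ^ n)⁻¹ * x ^ m * y ^ n = (x * c ^ n) ^ m := by
    rw [← conj_pow_eq_mul_pow_of_commutator hc hxy]
    simpa using (conj_pow (a := (y ^ n)⁻¹) (b := x) (i := m)).symm
  have hxc : Commute x c := mem_center_iff.mp hc x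
  calc (x ^ m)⁻¹ * (y ^ n)⁻¹ * x ^ m * y ^ n
      = (x ^ m)⁻¹ * ((y ^ n)⁻¹ * x ^ m * y ^ n) := by group
    _ = c ^ (m * n) := by
        rw [hconj, (hxc.pow_right n).mul_pow, ← pow_mul, mul_comm n m, inv_mul_cancel_left]

lemma mul_pow_mul_pow_choose_of_commutator (hc : c ∈ center G) (hxy : x⁻¹ * y⁻¹ * x * y = c)
    (n : ℕ) : (x * y) ^ n * c ^ n.choose 2 = x ^ n * y ^ n := by
  induction n with
  | zero => simp
  | succ n ih =>
    have hch : (n + 1).choose 2 = n.choose 2 + n := by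
      rw [Nat.choose_succ_succ', Nat.choose_one_right, add_comm]
    have hswap : y ^ n * x * c ^ n = x * y ^ n := by
      rw [mul_assoc, ← conj_pow_eq_mul_pow_of_commutator hc hxy n]; group
    calc (x * y) ^ (n + 1) * c ^ (n + 1).choose 2
        = (x * y) ^ n * (x * y) * c ^ n.choose 2 * c ^ n := by
          rw [hch, pow_succ, pow_add, mul_assoc _ (c ^ _)]
      _ = x ^ n * y ^ n * x * c ^ n * y := by
          rw [← mul_pow_mul_comm_of_mem_center hc _ _ (x * y), ih,
            mul_pow_mul_comm_of_mem_center hc n _ y]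
          group
      _ = x ^ (n + 1) * y ^ (n + 1) := by
          rw [mul_assoc (x ^ n) (y ^ n), mul_assoc (x ^ n), hswap]; group

end CentralCommutator

section Modulo

variable {G : Type*} [Group G] {N : Subgroup G} [N.Normal]

lemma mem_upperCentralSeriesStep_iff_inv {a : G} :
    a ∈ N.upperCentralSeriesStep ↔ ∀ g, a⁻¹ * g⁻¹ * a * g ∈ N := by
  rw [← inv_mem_iff, Subgroup.mem_upperCentralSeriesStep]
  refine ⟨fun h g => by simpa [commutatorElement_def] using h g⁻¹,
    fun h g => by simpa [commutatorElement_def] using h g⁻¹⟩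

lemma inv_commutator_mem_of_mem_upperCentralSeriesStep {a : G}
    (ha : a ∈ N.upperCentralSeriesStep) (g : G) : g⁻¹ * a⁻¹ * g * a ∈ N := by
  rw [show g⁻¹ * a⁻¹ * g * a = (a⁻¹ * g⁻¹ * a * g)⁻¹ by group]
  exact inv_mem (mem_upperCentralSeriesStep_iff_inv.mp ha g)

lemma upperCentralSeriesStep_mono {N' : Subgroup G} [N'.Normal] (h : N ≤ N') :
    N.upperCentralSeriesStep ≤ N'.upperCentralSeriesStep :=
  fun _ hx y => h (hx y)

lemma mk'_mem_center_of_mem_upperCentralSeriesStep {a : G} (ha : a ∈ N.upperCentralSeriesStep) :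
    QuotientGroup.mk' N a ∈ center (G ⧸ N) := by
  rwa [Subgroup.upperCentralSeriesStep_eq_comap_center, mem_comap] at ha

lemma mem_iff_mk'_eq_one {a : G} : a ∈ N ↔ QuotientGroup.mk' N a = 1 := by
  rw [← MonoidHom.mem_ker, QuotientGroup.ker_mk']

lemma pow_mem_of_closure_le_upperCentralSeriesStep {s : Set G} {n : ℕ}
    (hs : closure s ≤ N.upperCentralSeriesStep) (hpow : ∀ x ∈ s, x ^ n ∈ N) {x : G}
    (hx : x ∈ closure s) : x ^ n ∈ N := by
  induction hx using closure_induction with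
  | mem x hx => exact hpow x hx
  | one => simp
  | mul a b ha _ iha ihb =>
    have hab : Commute (QuotientGroup.mk' N a) (QuotientGroup.mk' N b) :=
      (mem_center_iff.mp (mk'_mem_center_of_mem_upperCentralSeriesStep (hs ha)) _).symm
    rw [mem_iff_mk'_eq_one] at iha ihb ⊢
    rw [map_pow, map_mul, hab.mul_pow, ← map_pow, ← map_pow, iha, ihb, one_mul]
  | inv a _ iha => simpa using iha

variable {x y : G}

lemma mul_pow_mem_of_commutator_mem_upperCentralSeriesStep {n k : ℕ}
    (hc : x⁻¹ * y⁻¹ * x * y ∈ N.upperCentralSeriesStep)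
    (hk : (x⁻¹ * y⁻¹ * x * y) ^ k ∈ N)
    (hkn : k ∣ n.choose 2) : (x ^ n * y ^ n)⁻¹ * (x * y) ^ n ∈ N := by
  obtain ⟨l, hl⟩ := hkn
  have key := mul_pow_mul_pow_choose_of_commutator (x := QuotientGroup.mk' N x)
    (y := QuotientGroup.mk' N y) (mk'_mem_center_of_mem_upperCentralSeriesStep hc)
    (by simp only [map_mul, map_inv]) n
  rw [mem_iff_mk'_eq_one, map_pow] at hk
  rw [hl, pow_mul, hk, one_pow, mul_one] at key
  rw [mem_iff_mk'_eq_one]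
  simp only [map_mul, map_inv, map_pow, key, inv_mul_cancel]

lemma commutator_pow_pow_mem_of_commutator_mem_upperCentralSeriesStep {m n k : ℕ}
    (hc : x⁻¹ * y⁻¹ * x * y ∈ N.upperCentralSeriesStep)
    (hk : (x⁻¹ * y⁻¹ * x * y) ^ k ∈ N)
    (hkmn : k ∣ m * n) : (x ^ m)⁻¹ * (y ^ n)⁻¹ * x ^ m * y ^ n ∈ N := by
  obtain ⟨l, hl⟩ := hkmn
  have key := commutator_pow_pow_of_commutator (x := QuotientGroup.mk' N x)
    (y := QuotientGroup.mk' N y) (mk'_mem_center_of_mem_upperCentralSeriesStep hc)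
    (by simp only [map_mul, map_inv]) m n
  rw [mem_iff_mk'_eq_one, map_pow] at hk
  rw [hl, pow_mul, hk, one_pow] at key
  rw [mem_iff_mk'_eq_one]
  simpa only [map_mul, map_inv, map_pow] using key

end Modulo

section PowerStructure

variable (p e : ℕ) (G : Type*) [Group G]

def OmegaHasExponent (j : ℕ) : Prop :=
  ∀ x ∈ Omega G p j, x ^ p ^ j = 1

def OmegaCommutatorDrop (j : ℕ) : Prop :=
  Omega G p j ≤ (Omega G p (j - (e + 1))).upperCentralSeriesStep

def PowMulLaw (j : ℕ) : Prop :=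
  ∀ x y : G, x⁻¹ * y⁻¹ * x * y ∈ Omega G p (j - e) →
    x ^ p ^ j * y ^ p ^ j = (x * y) ^ p ^ j

variable {p e G}

theorem omegaHasExponent_of_commutatorDrop (hB : ∀ j, OmegaCommutatorDrop p e G j) :
    ∀ j, OmegaHasExponent p G j
  | 0 => fun x hx => by
    rw [Omega_zero, mem_bot] at hx
    rw [hx, one_pow]
  | j + 1 => fun x hx => by
    have hstep : Omega G p (j + 1) ≤ (Omega G p j).upperCentralSeriesStep :=
      (hB (j + 1)).trans (upperCentralSeriesStep_mono (Omega_mono (by omega)))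
    have hxp : x ^ p ∈ Omega G p j :=
      pow_mem_of_closure_le_upperCentralSeriesStep hstep (fun y (hy : y ^ p ^ (j + 1) = 1) =>
        mem_Omega_of_pow_eq_one (by rwa [← pow_mul, ← pow_succ'])) hx
    rw [pow_succ', pow_mul]
    exact omegaHasExponent_of_commutatorDrop hB j _ hxp

theorem powMulLaw_of_commutatorDrop (hdvd : p ∣ (p ^ (e + 1)).choose 2)
    (hB : ∀ j, OmegaCommutatorDrop p e G j) (j : ℕ) : PowMulLaw p e G j := by
  induction j using Nat.strong_induction_on with
  | _ j ih =>
  intro x y hxy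
  have hA := omegaHasExponent_of_commutatorDrop hB
  obtain hj | ⟨k, rfl⟩ : j ≤ e ∨ ∃ k, j = k + e + 1 := by
    rcases le_or_gt j e with h | h
    · exact .inl h
    · exact .inr ⟨j - e - 1, by omega⟩
  · rw [Nat.sub_eq_zero_of_le hj, Omega_zero, mem_bot] at hxy
    have hcomm : Commute x⁻¹ y⁻¹ :=
      commutatorElement_eq_one_iff_commute.mp (by rwa [commutatorElement_def, inv_inv, inv_inv])
    exact (Commute.inv_inv_iff.mp hcomm).mul_pow _ |>.symm
  set q := p ^ (e + 1)
  rw [show k + e + 1 - e = k + 1 by omega] at hxy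
  have hc : x⁻¹ * y⁻¹ * x * y ∈ (Omega G p (k - e)).upperCentralSeriesStep := by
    simpa using hB (k + 1) hxy
  have hcp : (x⁻¹ * y⁻¹ * x * y) ^ p ^ (k + 1) = 1 := hA _ _ hxy
  have hz : (x ^ q * y ^ q)⁻¹ * (x * y) ^ q ∈ Omega G p k :=
    mul_pow_mem_of_commutator_mem_upperCentralSeriesStep
      (upperCentralSeriesStep_mono (Omega_mono (Nat.sub_le k e)) hc)
      (mem_Omega_of_pow_eq_one (by rwa [← pow_mul, ← pow_succ'])) hdvd
  have hxqyq : (x ^ q)⁻¹ * (y ^ q)⁻¹ * x ^ q * y ^ q ∈ Omega G p (k - e) :=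
    commutator_pow_pow_mem_of_commutator_mem_upperCentralSeriesStep hc
      (by simpa [show k + 1 - (e + 1) = k - e by omega] using pow_pow_mem_Omega hcp (e + 1))
      (dvd_mul_right q q)
  set z := (x ^ q * y ^ q)⁻¹ * (x * y) ^ q
  have hwz : (x ^ q * y ^ q)⁻¹ * z⁻¹ * (x ^ q * y ^ q) * z ∈ Omega G p (k - e) :=
    inv_commutator_mem_of_mem_upperCentralSeriesStep
      (upperCentralSeriesStep_mono (Omega_mono (by omega)) (hB k hz)) _
  have hpow : ∀ w : G, (w ^ q) ^ p ^ k = w ^ p ^ (k + e + 1) := fun w => by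
    rw [← pow_mul, ← pow_add, add_comm (e + 1), add_assoc]
  calc x ^ p ^ (k + e + 1) * y ^ p ^ (k + e + 1) = (x ^ q) ^ p ^ k * (y ^ q) ^ p ^ k := by
        rw [hpow, hpow]
    _ = (x ^ q * y ^ q) ^ p ^ k := ih k (by omega) _ _ hxqyq
    _ = (x ^ q * y ^ q) ^ p ^ k * z ^ p ^ k := by rw [hA k z hz, mul_one]
    _ = (x ^ q * y ^ q * z) ^ p ^ k := ih k (by omega) _ _ hwz
    _ = (x * y) ^ p ^ (k + e + 1) := by rw [mul_inv_cancel_left, hpow]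

end PowerStructure

lemma exists_normal_ne_top_of_zpowers_ne_top {G : Type*} [Group G] [Finite G]
    [Group.IsNilpotent G] {a : G} (h : zpowers a ≠ ⊤) :
    ∃ M : Subgroup G, M.Normal ∧ M ≠ ⊤ ∧ a ∈ M := by
  obtain ⟨M, hM, haM⟩ := (eq_top_or_exists_le_coatom (zpowers a)).resolve_left h
  exact ⟨M, NormalizerCondition.normal_of_coatom M Group.normalizerCondition_of_isNilpotent hM,
    hM.1, haM (mem_zpowers a)⟩

section Descent

variable {p e : ℕ} {K : Type*} [Group K]

lemma pow_eq_one_of_powMulLaw {m : ℕ} (hC : PowMulLaw p e K m) {u d : K}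
    (hud : u⁻¹ * d⁻¹ * u * d ∈ Omega K p (m - e)) (h : (u * d) ^ p ^ m = u ^ p ^ m) :
    d ^ p ^ m = 1 :=
  mul_left_cancel (a := u ^ p ^ m) (by rw [hC u d hud, h, mul_one])

lemma inv_mul_pow_pow_eq_one_of_pow_pow_eq (hB : ∀ k, OmegaCommutatorDrop p e K k)
    (hC : ∀ k, PowMulLaw p e K k)
    {j : ℕ} (hj : e + 1 ≤ j) {u v : K} (hu : u ^ p ^ j = 1)
    (huv : ∀ m, j ≤ m + e + 1 → v ^ p ^ m = u ^ p ^ m) :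
    (u⁻¹ * v) ^ p ^ (j - (e + 1)) = 1 := by
  set d := u⁻¹ * v
  have hv : u * d = v := mul_inv_cancel_left u v
  have hdown : ∀ t ≤ e, d ^ p ^ (j - 1 - t) = 1 := by
    intro t
    induction t with
    | zero =>
      intro _
      refine pow_eq_one_of_powMulLaw (hC _) (u := u) ?_ (by rw [hv, huv _ (by omega)])
      rw [show u⁻¹ * d⁻¹ * u * d = u⁻¹ * v⁻¹ * u * v by rw [← hv]; group,
        show j - 1 - 0 - e = j - (e + 1) by omega]
      exact mem_upperCentralSeriesStep_iff_inv.mp (hB j (mem_Omega_of_pow_eq_one hu)) v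
    | succ t ih =>
      intro ht
      refine pow_eq_one_of_powMulLaw (hC _) (u := u) ?_ (by rw [hv, huv _ (by omega)])
      have hdu := inv_commutator_mem_of_mem_upperCentralSeriesStep
        (hB _ (mem_Omega_of_pow_eq_one (ih (by omega)))) u
      rwa [show j - 1 - t - (e + 1) = j - 1 - (t + 1) - e by omega] at hdu
  simpa [show j - 1 - e = j - (e + 1) by omega] using hdown e le_rfl

end Descent

section Induction

variable {p e : ℕ}

lemma commutator_mem_Omega_of_pow_eq_one {G : Type*} [Group G] [Finite G] [Group.IsNilpotent G]
    (hcent : Omega G p (e + 1) ≤ center G) (hdvd : p ∣ (p ^ (e + 1)).choose 2)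
    (hM : ∀ M : Subgroup G, M ≠ ⊤ → ∀ j, OmegaCommutatorDrop p e M j)
    {j : ℕ} {a : G} (ha : a ^ p ^ j = 1) (g : G) :
    a⁻¹ * g⁻¹ * a * g ∈ Omega G p (j - (e + 1)) := by
  by_cases hag : Commute a g
  · rw [mul_assoc _ a, hag.eq]
    simp
  have hcentral : ∀ m, j ≤ m + e + 1 → a ^ p ^ m ∈ center G := fun m hm =>
    hcent <| mem_Omega_of_pow_eq_one <| by
      rw [← pow_mul, ← pow_add]
      exact pow_pow_eq_one_of_le ha hm
  have hj : e + 1 ≤ j := by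
    by_contra! hj
    exact hag (mem_center_iff.mp (by simpa using hcentral 0 (by omega)) g).symm
  have hgen : zpowers a ≠ ⊤ := fun h => by
    obtain ⟨k, rfl⟩ := mem_zpowers_iff.mp (h ▸ mem_top g)
    exact hag ((Commute.refl a).zpow_right k)
  obtain ⟨M, hMn, hMtop, haM⟩ := exists_normal_ne_top_of_zpowers_ne_top hgen
  let u : M := ⟨a, haM⟩
  let v : M := ⟨g⁻¹ * a * g, hMn.conj_mem' a haM g⟩
  have hu : u ^ p ^ j = 1 := Subtype.ext (by simpa [u] using ha)
  have huv : ∀ m, j ≤ m + e + 1 → v ^ p ^ m = u ^ p ^ m := fun m hm => by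
    have hconj : (g⁻¹ * a * g) ^ p ^ m = g⁻¹ * a ^ p ^ m * g := by
      simpa using conj_pow (a := g⁻¹) (b := a) (i := p ^ m)
    refine Subtype.ext ?_
    rw [coe_pow, coe_pow, hconj, mul_assoc, ← mem_center_iff.mp (hcentral m hm) g,
      inv_mul_cancel_left]
  have hd := inv_mul_pow_pow_eq_one_of_pow_pow_eq (hM M hMtop)
    (powMulLaw_of_commutatorDrop hdvd (hM M hMtop)) hj hu huv
  refine mem_Omega_of_pow_eq_one ?_
  simpa [u, v, mul_assoc] using congrArg Subtype.val hd

theorem IsPGroup.omegaCommutatorDrop [Fact p.Prime] {G : Type*} [Group G] [Finite G]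
    (hG : IsPGroup p G) (hcent : Omega G p (e + 1) ≤ center G)
    (hdvd : p ∣ (p ^ (e + 1)).choose 2) (j : ℕ) : OmegaCommutatorDrop p e G j := by
  induction h : Nat.card G using Nat.strong_induction_on generalizing G j with
  | _ n ih =>
  have := hG.isNilpotent
  have hM : ∀ M : Subgroup G, M ≠ ⊤ → ∀ j, OmegaCommutatorDrop p e M j := fun M hM j =>
    ih _ (h ▸ M.card_le_card_group.lt_of_ne fun hc => hM (M.eq_top_of_card_eq hc))
      (hG.to_subgroup M) (Omega_le_center_of_le_center M hcent) j rfl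
  rw [OmegaCommutatorDrop, Omega, closure_le]
  exact fun a ha => mem_upperCentralSeriesStep_iff_inv.mpr
    (commutator_mem_Omega_of_pow_eq_one hcent hdvd hM ha)

end Induction

lemma IsPCentral.Omega_le_center {p : ℕ} {G : Type*} [Group G] (h : IsPCentral p G) :
    Omega G p ((if p = 2 then 1 else 0) + 1) ≤ center G := by
  unfold IsPCentral at h
  split_ifs at h ⊢ with hp
  · exact hp ▸ h
  · exact h

lemma Nat.Prime.dvd_choose_two_pow {p : ℕ} (hp : p.Prime) :
    p ∣ (p ^ ((if p = 2 then 1 else 0) + 1)).choose 2 := by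
  split_ifs with h2
  · subst h2
    decide
  · simpa using hp.dvd_choose_self two_ne_zero (lt_of_le_of_ne hp.two_le (Ne.symm h2))

theorem stmt_18_general (p : ℕ) (hp : p.Prime) (G : Type*) [Group G] [Finite G]
    (hpg : IsPGroup p G) (hcent : IsPCentral p G)
    (ε i : ℕ) (hε : ε = if p = 2 then 1 else 0)
    (x y : G) (hxy : x⁻¹ * y⁻¹ * x * y ∈ Omega G p (i - ε)) :
    x ^ p ^ i * y ^ p ^ i = (x * y) ^ p ^ i := by
  have := Fact.mk hp
  subst hε
  exact powMulLaw_of_commutatorDrop hp.dvd_choose_two_pow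
    (hpg.omegaCommutatorDrop hcent.Omega_le_center hp.dvd_choose_two_pow) i x y hxy

theorem stmt_18 (p : ℕ) (hp : p.Prime) (G : Type*) [Group G] [Finite G]
    (hpg : IsPGroup p G) (hcent : IsPCentral p G)
    (ε i : ℕ) (hε : ε = if p = 2 then 1 else 0) (hi : ε ≤ i)
    (x y : G) (hxy : x⁻¹ * y⁻¹ * x * y ∈ Omega G p (i - ε)) :
    x ^ p ^ i * y ^ p ^ i = (x * y) ^ p ^ i :=
  stmt_18_general p hp G hpg hcent ε i hε x y hxy
end
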